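/- arXiv:1702.01046 — 2 statements merged into one kernel-verified Lean document; each statement's English description precedes it below -/
import Mathlib

section
/- The long-term average cost of the deterministic inventory policy is finite: lim sup_{t→∞} (1/t)(∫₀ᵗ c₀(x(s)) ds + Σ_k I_{t_k ≤ t} c₁(x(t_k-), x(t_k))) ≤ 6k₁ + 9 < ∞. -/
/-! On cycle `n + 1`, which starts at `cycleStart (n + 1) = ∑_{m<n} (2^m + √2^m)`, the inventory
is a sawtooth of `2^n` teeth of height `1` followed by one tooth of height `√2^n`, so the holding
cost `∫ 2|x|` over the cycle is `2^n + (√2^n)^2 = 2 · 2^n`, while its ordering cost is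
`(2^(n+1) + 1) k₁ + 2^n + √2^n`. Up to a time `t` in cycle `M + 1` both costs are therefore
`O(2^M)` with explicit constants, whereas `t ≥ cycleStart (M + 1) ≥ 2^M - 1`. -/

open Filter

/-- Start time `t_{i,1}` of cycle `i` (`i ≥ 1`) of the deterministic policy:
the total time of the first `i-1` cycles, `2^(i-1) + (2^((i-1)/2)-1)/(√2-1) - 1`. -/
noncomputable def cycleStart (i : ℕ) : ℝ :=
  2 ^ (i - 1) + ((2 : ℝ) ^ (((i : ℝ) - 1) / 2) - 1) / (Real.sqrt 2 - 1) - 1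

/-- Time of the `j`-th order (`1 ≤ j ≤ 2^i + 1`) of cycle `i ≥ 1`:
the first `2^(i-1)` orders (the `(0,1)` orders of Phase 1) occur at unit time
intervals; the large order and the subsequent `2^(i-1)` size-0 orders all occur
at time `t_{i,1} + 2^(i-1)`. -/
noncomputable def ordTime (i j : ℕ) : ℝ :=
  if j ≤ 2 ^ (i - 1) then cycleStart i + (j - 1 : ℕ) else cycleStart i + 2 ^ (i - 1)

/-- Size of the `j`-th order of cycle `i`: size 1 for the `2^(i-1)` Phase-1
orders, size `2^((i-1)/2)` for the single large order, size 0 afterwards. -/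
noncomputable def ordSize (i j : ℕ) : ℝ :=
  if j ≤ 2 ^ (i - 1) then 1
  else if j = 2 ^ (i - 1) + 1 then (2 : ℝ) ^ (((i : ℝ) - 1) / 2) else 0

/-- The deterministic inventory process `x(t) = -t + Σ_k 1_{t_k ≤ t} y_k`
under the cyclic policy. -/
noncomputable def invLevel (t : ℝ) : ℝ :=
  -t + ∑' i : ℕ, ∑ j ∈ Finset.Icc 1 (2 ^ (i + 1) + 1),
    if ordTime (i + 1) j ≤ t then ordSize (i + 1) j else 0

open MeasureTheory Finset

lemma two_rpow_succ_sub_one_div_two (n : ℕ) :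
    (2 : ℝ) ^ ((((n + 1 : ℕ) : ℝ) - 1) / 2) = √2 ^ n := by
  rw [Real.sqrt_eq_rpow, ← Real.rpow_natCast, ← Real.rpow_mul zero_le_two]
  congr 1
  push_cast
  ring

lemma cycleStart_succ (n : ℕ) :
    cycleStart (n + 1) = ∑ m ∈ range n, ((2 : ℝ) ^ m + √2 ^ m) := by
  have hsqrt : (1 : ℝ) < √2 := by simpa using Real.sqrt_lt_sqrt zero_le_one one_lt_two
  rw [cycleStart, Nat.add_sub_cancel, two_rpow_succ_sub_one_div_two, sum_add_distrib,
    geom_sum_eq one_lt_two.ne', geom_sum_eq hsqrt.ne']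
  ring

lemma cycleStart_one : cycleStart 1 = 0 := by
  simp [cycleStart_succ 0]

lemma cycleStart_succ_succ (n : ℕ) :
    cycleStart (n + 2) = cycleStart (n + 1) + 2 ^ n + √2 ^ n := by
  rw [cycleStart_succ, cycleStart_succ, sum_range_succ, add_assoc]

lemma cycleStart_add_two_pow_le (n : ℕ) : cycleStart (n + 1) + 2 ^ n ≤ cycleStart (n + 2) := by
  rw [cycleStart_succ_succ]
  linarith [pow_nonneg (Real.sqrt_nonneg 2) n]

lemma monotone_cycleStart_succ : Monotone fun n ↦ cycleStart (n + 1) :=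
  monotone_nat_of_le_succ fun n ↦ by
    linarith [cycleStart_add_two_pow_le n, pow_nonneg (zero_le_two (α := ℝ)) n]

lemma two_pow_sub_one_le_cycleStart_succ (n : ℕ) : (2 : ℝ) ^ n - 1 ≤ cycleStart (n + 1) := by
  rw [cycleStart_succ, sum_add_distrib, geom_sum_eq one_lt_two.ne']
  linarith [sum_nonneg fun m (_ : m ∈ range n) ↦ pow_nonneg (Real.sqrt_nonneg 2) m]

lemma cycleStart_succ_le (n : ℕ) : cycleStart (n + 1) ≤ 2 * (2 ^ n - 1) := by
  have hsqrt : √2 ≤ 2 := Real.sqrt_le_iff.2 ⟨zero_le_two, by norm_num⟩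
  calc cycleStart (n + 1) ≤ ∑ m ∈ range n, 2 * (2 : ℝ) ^ m := by
        rw [cycleStart_succ]
        gcongr with m
        linarith [pow_le_pow_left₀ (Real.sqrt_nonneg 2) hsqrt m]
    _ = 2 * (2 ^ n - 1) := by rw [← mul_sum, geom_sum_eq one_lt_two.ne']; ring

lemma sum_Icc_ite_le {N j : ℕ} (hj : j ≤ N) :
    ∑ i ∈ Icc 1 N, (if i ≤ j then (1 : ℝ) else 0) = j := by
  have hfilter : {i ∈ Icc 1 N | i ≤ j} = Icc 1 j := by
    ext i; simp only [mem_filter, mem_Icc]; omega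
  simp [sum_boole, hfilter]

lemma cycleStart_le_ordTime (c j : ℕ) : cycleStart c ≤ ordTime c j := by
  unfold ordTime
  split_ifs <;> simp

lemma ordTime_succ_le (n j : ℕ) : ordTime (n + 1) j ≤ cycleStart (n + 1) + 2 ^ n := by
  unfold ordTime
  rw [Nat.add_sub_cancel]
  split_ifs with hj
  · gcongr
    exact_mod_cast (Nat.sub_le j 1).trans hj
  · rfl

lemma ordSize_nonneg (c j : ℕ) : 0 ≤ ordSize c j := by
  unfold ordSize
  split_ifs <;> positivity

lemma sum_ordSize (n : ℕ) :
    ∑ j ∈ Icc 1 (2 ^ (n + 1) + 1), ordSize (n + 1) j = 2 ^ n + √2 ^ n := by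
  have hsplit : ∀ j, ordSize (n + 1) j =
      (if j ≤ 2 ^ n then 1 else 0) + (if 2 ^ n + 1 = j then √2 ^ n else 0) := by
    intro j
    simp only [ordSize, Nat.add_sub_cancel, two_rpow_succ_sub_one_div_two]
    split_ifs <;> first | omega | ring
  have hpow : 2 ^ n ≤ 2 ^ (n + 1) := Nat.pow_le_pow_right two_pos n.le_succ
  have hmem : 2 ^ n + 1 ∈ Icc 1 (2 ^ (n + 1) + 1) := by rw [mem_Icc]; omega
  rw [sum_congr rfl fun j _ ↦ hsplit j, sum_add_distrib, sum_Icc_ite_le (by omega),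
    sum_ite_eq _ _ _, if_pos hmem]
  push_cast
  ring

/-- The total weight `w` of the orders of cycle `n + 1` (not `n`) placed by time `s`. -/
noncomputable def cycleSum (w : ℕ → ℕ → ℝ) (n : ℕ) (s : ℝ) : ℝ :=
  ∑ j ∈ Icc 1 (2 ^ (n + 1) + 1), if ordTime (n + 1) j ≤ s then w (n + 1) j else 0

lemma invLevel_eq (s : ℝ) : invLevel s = -s + ∑' n, cycleSum ordSize n s := rfl

section cycleSum

variable (w : ℕ → ℕ → ℝ) {n N : ℕ} {s : ℝ}

lemma cycleSum_eq_zero (hs : s < cycleStart (n + 1)) : cycleSum w n s = 0 :=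
  sum_eq_zero fun j _ ↦ if_neg (hs.trans_le (cycleStart_le_ordTime _ j)).not_ge

lemma tsum_cycleSum (hs : s < cycleStart (N + 1)) :
    ∑' n, cycleSum w n s = ∑ n ∈ range N, cycleSum w n s :=
  tsum_eq_sum fun _ hn ↦ cycleSum_eq_zero w <|
    hs.trans_le (monotone_cycleStart_succ (not_lt.1 (mem_range.not.1 hn)))

lemma cycleSum_eq_sum (hs : cycleStart (n + 1) + 2 ^ n ≤ s) :
    cycleSum w n s = ∑ j ∈ Icc 1 (2 ^ (n + 1) + 1), w (n + 1) j :=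
  sum_congr rfl fun j _ ↦ if_pos ((ordTime_succ_le n j).trans hs)

variable {w}

lemma cycleSum_nonneg (hw : ∀ j, 0 ≤ w (n + 1) j) : 0 ≤ cycleSum w n s :=
  sum_nonneg fun j _ ↦ by split_ifs <;> simp [hw]

lemma cycleSum_le_sum (hw : ∀ j, 0 ≤ w (n + 1) j) :
    cycleSum w n s ≤ ∑ j ∈ Icc 1 (2 ^ (n + 1) + 1), w (n + 1) j :=
  sum_le_sum fun j _ ↦ by split_ifs <;> simp [hw]

end cycleSum

lemma sum_range_cycleSum_ordSize {N : ℕ} {s : ℝ} (hs : cycleStart (N + 1) ≤ s) :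
    ∑ n ∈ range N, cycleSum ordSize n s = cycleStart (N + 1) := by
  rw [cycleStart_succ]
  refine sum_congr rfl fun n hn ↦ ?_
  rw [cycleSum_eq_sum, sum_ordSize]
  calc cycleStart (n + 1) + 2 ^ n ≤ cycleStart (n + 2) := cycleStart_add_two_pow_le n
    _ ≤ cycleStart (N + 1) := monotone_cycleStart_succ (mem_range.1 hn)
    _ ≤ s := hs

lemma cycleSum_ordSize_eq_of_mem_phase1 {n j : ℕ} {s : ℝ} (hj : j < 2 ^ n)
    (hs : s ∈ Set.Ico (cycleStart (n + 1) + j) (cycleStart (n + 1) + j + 1)) :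
    cycleSum ordSize n s = j + 1 := by
  have hpow : 2 ^ n ≤ 2 ^ (n + 1) := Nat.pow_le_pow_right two_pos n.le_succ
  rw [cycleSum, ← Nat.cast_add_one, ← sum_Icc_ite_le (N := 2 ^ (n + 1) + 1) (by omega)]
  refine sum_congr rfl fun i _ ↦ ?_
  simp only [ordTime, ordSize, Nat.add_sub_cancel]
  by_cases hin : i ≤ 2 ^ n
  · rw [if_pos hin, if_pos hin]
    by_cases hij : i ≤ j + 1
    · have : ((i - 1 : ℕ) : ℝ) ≤ j := by exact_mod_cast (by omega : i - 1 ≤ j)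
      rw [if_pos (by linarith [hs.1]), if_pos hij]
    · have : (j : ℝ) + 1 ≤ (i - 1 : ℕ) := by exact_mod_cast (by omega : j + 1 ≤ i - 1)
      rw [if_neg (by linarith [hs.2]), if_neg hij]
  · have hjn : (j : ℝ) + 1 ≤ 2 ^ n := by exact_mod_cast hj
    rw [if_neg hin, if_neg hin, if_neg (by linarith [hs.2]), if_neg (by omega)]

lemma invLevel_eq_of_mem_cycle {n : ℕ} {s : ℝ}
    (hs : s ∈ Set.Ico (cycleStart (n + 1)) (cycleStart (n + 2))) :
    invLevel s = cycleStart (n + 1) + cycleSum ordSize n s - s := by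
  rw [invLevel_eq, tsum_cycleSum _ hs.2, sum_range_succ, sum_range_cycleSum_ordSize hs.1]
  ring

lemma invLevel_eq_of_mem_phase1 {n j : ℕ} {s : ℝ} (hj : j < 2 ^ n)
    (hs : s ∈ Set.Ico (cycleStart (n + 1) + j) (cycleStart (n + 1) + j + 1)) :
    invLevel s = cycleStart (n + 1) + j + 1 - s := by
  have hjn : (j : ℝ) + 1 ≤ 2 ^ n := by exact_mod_cast hj
  rw [invLevel_eq_of_mem_cycle, cycleSum_ordSize_eq_of_mem_phase1 hj hs]
  · ring
  · constructor
    · linarith [hs.1, (Nat.cast_nonneg j : (0 : ℝ) ≤ j)]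
    · linarith [hs.2, cycleStart_add_two_pow_le n]

lemma invLevel_eq_of_mem_phase2 {n : ℕ} {s : ℝ}
    (hs : s ∈ Set.Ico (cycleStart (n + 1) + 2 ^ n) (cycleStart (n + 2))) :
    invLevel s = cycleStart (n + 2) - s := by
  rw [invLevel_eq_of_mem_cycle ⟨by linarith [hs.1, pow_nonneg (zero_le_two (α := ℝ)) n], hs.2⟩,
    cycleSum_eq_sum _ hs.1, sum_ordSize, cycleStart_succ_succ]
  ring

lemma exists_lt_cycleStart (t : ℝ) : ∃ N, t < cycleStart (N + 1) := by
  obtain ⟨N, hN⟩ := pow_unbounded_of_one_lt (t + 1) one_lt_two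
  exact ⟨N, by linarith [two_pow_sub_one_le_cycleStart_succ N]⟩

lemma monotone_cycleSum {w : ℕ → ℕ → ℝ} {n : ℕ} (hw : ∀ j, 0 ≤ w (n + 1) j) :
    Monotone (cycleSum w n) := fun s s' hss' ↦
  sum_le_sum fun j _ ↦ by
    split_ifs with h h' <;> first | exact le_rfl | exact hw j | exact absurd (h.trans hss') h'

lemma monotone_invLevel_add_self : Monotone fun s ↦ invLevel s + s := by
  intro s s' hss'
  obtain ⟨N, hN⟩ := exists_lt_cycleStart s'
  simp only [invLevel_eq, neg_add_cancel_comm, tsum_cycleSum _ hN,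
    tsum_cycleSum _ (hss'.trans_lt hN)]
  exact sum_le_sum fun n _ ↦ monotone_cycleSum (ordSize_nonneg _) hss'

lemma intervalIntegrable_invLevel (a b : ℝ) :
    IntervalIntegrable (fun s ↦ 2 * |invLevel s|) volume a b := by
  have h := (monotone_invLevel_add_self.intervalIntegrable (μ := volume) (a := a) (b := b)).sub
    intervalIntegral.intervalIntegrable_id
  simpa using h.abs.const_mul 2

lemma integral_two_mul_abs_of_eqOn {f : ℝ → ℝ} {a b : ℝ} (hab : a ≤ b)
    (hf : Set.EqOn f (fun s ↦ b - s) (Set.Ico a b)) :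
    ∫ s in a..b, 2 * |f s| = (b - a) ^ 2 := by
  rw [intervalIntegral.integral_congr_Ioo_of_le hab (g := fun s ↦ 2 * (b - s))]
  · rw [intervalIntegral.integral_comp_sub_left (fun x : ℝ ↦ 2 * x) b,
      intervalIntegral.integral_const_mul, integral_id]
    ring
  · intro s hs
    simp only [hf (Set.Ioo_subset_Ico_self hs), abs_of_pos (sub_pos.2 hs.2)]

lemma integral_cycle (n : ℕ) :
    ∫ s in cycleStart (n + 1)..cycleStart (n + 2), 2 * |invLevel s| = 2 * 2 ^ n := by
  set c := cycleStart (n + 1)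
  have hphase1 : ∫ s in c..c + 2 ^ n, 2 * |invLevel s| = 2 ^ n := by
    have hpiece : ∀ k ∈ range (2 ^ n),
        ∫ s in c + k..c + (k + 1 : ℕ), 2 * |invLevel s| = 1 := by
      intro k hk
      rw [Nat.cast_add_one, ← add_assoc, integral_two_mul_abs_of_eqOn (by linarith)
        fun s hs ↦ invLevel_eq_of_mem_phase1 (mem_range.1 hk) hs]
      ring
    calc ∫ s in c..c + 2 ^ n, 2 * |invLevel s|
        = ∑ k ∈ range (2 ^ n), ∫ s in c + k..c + (k + 1 : ℕ), 2 * |invLevel s| := by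
          rw [intervalIntegral.sum_integral_adjacent_intervals (a := fun k : ℕ ↦ c + k)
            fun k _ ↦ intervalIntegrable_invLevel _ _]
          simp
      _ = ∑ k ∈ range (2 ^ n), 1 := sum_congr rfl hpiece
      _ = 2 ^ n := by simp
  have hphase2 : ∫ s in c + 2 ^ n..cycleStart (n + 2), 2 * |invLevel s| = 2 ^ n := by
    rw [integral_two_mul_abs_of_eqOn (cycleStart_add_two_pow_le n)
      fun s hs ↦ invLevel_eq_of_mem_phase2 hs, cycleStart_succ_succ, add_sub_cancel_left,
      ← pow_mul, mul_comm, pow_mul, Real.sq_sqrt zero_le_two]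
  rw [← intervalIntegral.integral_add_adjacent_intervals (b := c + 2 ^ n)
    (intervalIntegrable_invLevel _ _) (intervalIntegrable_invLevel _ _), hphase1, hphase2]
  ring

lemma integral_zero_cycleStart (N : ℕ) :
    ∫ s in (0 : ℝ)..cycleStart (N + 1), 2 * |invLevel s| = 2 * (2 ^ N - 1) := by
  have h := intervalIntegral.sum_integral_adjacent_intervals (a := fun k ↦ cycleStart (k + 1))
    (n := N) (f := fun s ↦ 2 * |invLevel s|) (μ := volume)
    fun k _ ↦ intervalIntegrable_invLevel _ _
  simp only [zero_add, cycleStart_one, integral_cycle] at h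
  rw [← h, ← mul_sum, geom_sum_eq one_lt_two.ne']
  norm_num

lemma exists_mem_cycle {t : ℝ} (ht : 0 ≤ t) :
    ∃ n, t ∈ Set.Ico (cycleStart (n + 1)) (cycleStart (n + 2)) := by
  have hex := exists_lt_cycleStart t
  obtain ⟨n, hn⟩ : ∃ n, Nat.find hex = n + 1 :=
    Nat.exists_eq_succ_of_ne_zero fun h ↦ by
      have := Nat.find_spec hex
      rw [h, zero_add, cycleStart_one] at this
      linarith
  refine ⟨n, not_lt.1 (Nat.find_min hex (by omega)), ?_⟩
  simpa [hn] using Nat.find_spec hex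

lemma sum_orderCost (k₁ : ℝ) (n : ℕ) :
    ∑ j ∈ Icc 1 (2 ^ (n + 1) + 1), (k₁ + ordSize (n + 1) j)
      = (2 ^ (n + 1) + 1) * k₁ + (2 ^ n + √2 ^ n) := by
  rw [sum_add_distrib, sum_ordSize, sum_const, Nat.card_Icc, nsmul_eq_mul]
  push_cast
  ring

noncomputable def totalCost (k₁ t : ℝ) : ℝ :=
  (∫ s in (0 : ℝ)..t, 2 * |invLevel s|) + ∑' n, cycleSum (fun c j ↦ k₁ + ordSize c j) n t

section cost

variable {k₁ t : ℝ}

lemma tsum_orderCost_le (hk : 0 ≤ k₁) {N : ℕ} (ht : t < cycleStart (N + 1)) :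
    ∑' n, cycleSum (fun c j ↦ k₁ + ordSize c j) n t
      ≤ k₁ * (2 * (2 ^ N - 1) + N) + 2 * (2 ^ N - 1) := by
  have hw : ∀ n j, 0 ≤ k₁ + ordSize (n + 1) j := fun n j ↦ add_nonneg hk (ordSize_nonneg _ _)
  calc ∑' n, cycleSum (fun c j ↦ k₁ + ordSize c j) n t
      ≤ ∑ n ∈ range N, ((2 ^ (n + 1) + 1) * k₁ + (2 ^ n + √2 ^ n)) := by
        rw [tsum_cycleSum _ ht]
        exact sum_le_sum fun n _ ↦ (cycleSum_le_sum (hw n)).trans (sum_orderCost k₁ n).le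
    _ = k₁ * (2 * (2 ^ N - 1) + N) + cycleStart (N + 1) := by
        simp only [cycleStart_succ, sum_add_distrib, ← sum_mul, pow_succ, sum_const, card_range,
          nsmul_one, geom_sum_eq one_lt_two.ne']
        ring
    _ ≤ k₁ * (2 * (2 ^ N - 1) + N) + 2 * (2 ^ N - 1) := by
        gcongr
        exact cycleStart_succ_le N

lemma totalCost_nonneg (hk : 0 ≤ k₁) (ht : 0 ≤ t) : 0 ≤ totalCost k₁ t :=
  add_nonneg (intervalIntegral.integral_nonneg ht fun _ _ ↦ by positivity)
    (tsum_nonneg fun _ ↦ cycleSum_nonneg fun _ ↦ add_nonneg hk (ordSize_nonneg _ _))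

lemma totalCost_le (hk : 0 ≤ k₁) (ht : cycleStart 4 ≤ t) :
    totalCost k₁ t ≤ (6 * k₁ + 9) * t := by
  have h7 : (7 : ℝ) ≤ cycleStart 4 := by
    linarith [two_pow_sub_one_le_cycleStart_succ 3]
  obtain ⟨M, hM⟩ := exists_mem_cycle (by linarith : 0 ≤ t)
  have hM3 : 3 ≤ M := by
    have := monotone_cycleStart_succ.reflect_lt (ht.trans_lt hM.2)
    omega
  set P : ℝ := 2 ^ M with hP
  have hP8 : 8 ≤ P := by
    calc (8 : ℝ) = 2 ^ 3 := by norm_num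
      _ ≤ P := pow_le_pow_right₀ one_le_two hM3
  have hMP : (M : ℝ) < P := by rw [hP]; exact_mod_cast Nat.lt_two_pow_self
  have hint : ∫ s in (0 : ℝ)..t, 2 * |invLevel s| ≤ 2 * (2 * P - 1) := by
    calc ∫ s in (0 : ℝ)..t, 2 * |invLevel s|
        ≤ ∫ s in (0 : ℝ)..cycleStart (M + 2), 2 * |invLevel s| :=
          intervalIntegral.integral_mono_interval le_rfl (by linarith) hM.2.le
            (Eventually.of_forall fun _ ↦ by positivity) (intervalIntegrable_invLevel _ _)
      _ = 2 * (2 * P - 1) := by rw [integral_zero_cycleStart, pow_succ, ← hP]; ring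
  have horders := tsum_orderCost_le hk hM.2
  have htP : P - 1 ≤ t := (two_pow_sub_one_le_cycleStart_succ M).trans hM.1
  have hk' : k₁ * (4 * P + M - 1) ≤ k₁ * (6 * (P - 1)) :=
    mul_le_mul_of_nonneg_left (by linarith) hk
  rw [pow_succ, ← hP] at horders
  push_cast at horders
  calc totalCost k₁ t ≤ (6 * k₁ + 9) * (P - 1) := by
        unfold totalCost
        linarith
    _ ≤ (6 * k₁ + 9) * t := by gcongr

end cost

/-- The long-term average cost of the deterministic cyclic inventory policy is
finite: with holding cost rate `c₀(x) = 2|x|` and ordering cost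
`c₁(y,z) = k₁ + (z-y)`, `k₁ > 0`,
`limsup_{t→∞} (1/t)(∫₀ᵗ c₀(x(s)) ds + Σ_k 1_{t_k ≤ t} c₁(x(t_k-), x(t_k))) ≤ 6k₁ + 9 < ∞`. -/
theorem deterministic_lta_cost_finite (k₁ : ℝ) (hk₁ : 0 < k₁) :
    Filter.limsup
      (fun t : ℝ =>
        (1 / t) * ((∫ s in (0:ℝ)..t, 2 * |invLevel s|)
          + ∑' i : ℕ, ∑ j ∈ Finset.Icc 1 (2 ^ (i + 1) + 1),
              if ordTime (i + 1) j ≤ t then k₁ + ordSize (i + 1) j else 0))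
      Filter.atTop ≤ 6 * k₁ + 9 := by
  change limsup (fun t ↦ 1 / t * totalCost k₁ t) atTop ≤ 6 * k₁ + 9
  refine limsup_le_of_le (isCoboundedUnder_le_of_eventually_le atTop (x := 0) ?_) ?_
  · filter_upwards [eventually_ge_atTop 0] with t ht
    exact mul_nonneg (by positivity) (totalCost_nonneg hk₁.le ht)
  · filter_upwards [eventually_ge_atTop (cycleStart 4)] with t ht
    have ht0 : 0 < t := by linarith [two_pow_sub_one_le_cycleStart_succ 3]
    rw [one_div_mul_eq_div, div_le_iff₀ ht0]
    exact totalCost_le hk₁.le ht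
end

section
/- Let (L_k)_{k≥1} be nonnegative numbers indexed so that, writing k = 2^(i-1)+i+j-2 with i ≥ 1 and 1 ≤ j ≤ 2^(i-1), L_k = 2, and L_{2^i+i-1} = 2^(i-1) + 2^((i-1)/2) for i ≥ 1. Then lim sup_{n→∞} (1/n)Σ_{k=1}^n L_k ≤ 3. -/
/-! Cycle `m + 1` consists of `2 ^ m` intervals of cost `2` followed by one of cost
`2 ^ m + √2 ^ m`, so the total cost up to the end of cycle `m` is
`3 (2 ^ m - 1) + ∑_{i < m} √2 ^ i`, i.e. `3 n + O(√n)` at that index `n ≥ 2 ^ m`. Inside a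
cycle each new interval costs `2 < 3`, hence `∑_{k ≤ n} L k ≤ 3 n + (√2 + 1) √n` for every
`n ≥ 1`, and the Cesàro means are at most `3 + (√2 + 1) / √n`. -/

open Filter Topology Finset

/-- The index of the large sub-cycle closing cycle `m` (with `cycleEnd 0 = 0`); cycle `m + 1`
occupies the indices `cycleEnd m + 1, …, cycleEnd (m + 1)`. -/
def cycleEnd (m : ℕ) : ℕ := 2 ^ m + m - 1

@[simp] lemma cycleEnd_zero : cycleEnd 0 = 0 := rfl

lemma cycleEnd_succ (m : ℕ) : cycleEnd (m + 1) = cycleEnd m + 2 ^ m + 1 := by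
  have := Nat.one_le_two_pow (n := m)
  rw [cycleEnd, cycleEnd, pow_succ]
  omega

lemma cast_cycleEnd (m : ℕ) : (cycleEnd m : ℝ) = 2 ^ m + m - 1 := by
  rw [cycleEnd, Nat.cast_sub (by have := Nat.one_le_two_pow (n := m); omega)]
  push_cast
  ring

lemma exists_cycleEnd_le_lt (n : ℕ) : ∃ m, cycleEnd m ≤ n ∧ n < cycleEnd (m + 1) := by
  induction n with
  | zero => exact ⟨0, le_rfl, by simp [cycleEnd_succ]⟩
  | succ n ih =>
    obtain ⟨m, hle, hlt⟩ := ih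
    rcases (Nat.succ_le_of_lt hlt).lt_or_eq with h | h
    · exact ⟨m, by omega, h⟩
    · have := Nat.one_le_two_pow (n := m + 1)
      exact ⟨m + 1, h.ge, by rw [cycleEnd_succ (m + 1)]; omega⟩

lemma geom_sum_sqrt_two_le (m : ℕ) : ∑ i ∈ range m, √2 ^ i ≤ (√2 + 1) * √2 ^ m := by
  induction m with
  | zero => simp [add_nonneg]
  | succ m ih =>
    -- `(√2 + 1) * √2 = √2 + 2` makes the induction step exact.
    have hsq : √2 * √2 = 2 := Real.mul_self_sqrt zero_le_two
    rw [sum_range_succ, pow_succ]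
    nlinarith [pow_nonneg (Real.sqrt_nonneg 2) m]

lemma sqrt_two_pow_le_sqrt {m : ℕ} {x : ℝ} (h : 2 ^ m ≤ x) : √2 ^ m ≤ √x := by
  rw [Real.le_sqrt (by positivity) (le_trans (by positivity) h), ← pow_mul, mul_comm, pow_mul,
    Real.sq_sqrt zero_le_two]
  exact h

lemma rpow_half_eq_sqrt_two_pow (m : ℕ) : (2 : ℝ) ^ ((m : ℝ) / 2) = √2 ^ m := by
  rw [Real.sqrt_eq_rpow, ← Real.rpow_mul_natCast zero_le_two, div_eq_inv_mul, one_div]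

section HoldingCosts

variable {L : ℕ → ℝ}
    (hsmall : ∀ i j : ℕ, 1 ≤ i → 1 ≤ j → j ≤ 2 ^ (i - 1) → L (2 ^ (i - 1) + i + j - 2) = 2)
    (hbig : ∀ i : ℕ, 1 ≤ i → L (2 ^ i + i - 1) = 2 ^ (i - 1) + (2 : ℝ) ^ (((i : ℝ) - 1) / 2))

include hsmall in
lemma sum_Icc_cycleEnd_add {m j : ℕ} (hj : j ≤ 2 ^ m) :
    ∑ k ∈ Icc 1 (cycleEnd m + j), L k = ∑ k ∈ Icc 1 (cycleEnd m), L k + 2 * j := by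
  induction j with
  | zero => simp
  | succ j ih =>
    have hL : L (cycleEnd m + j + 1) = 2 := by
      have h := hsmall (m + 1) (j + 1) (by omega) (by omega) (by simpa using hj)
      have := Nat.one_le_two_pow (n := m)
      rwa [Nat.add_sub_cancel, show 2 ^ m + (m + 1) + (j + 1) - 2 = cycleEnd m + j + 1 by
        unfold cycleEnd; omega] at h
    rw [← add_assoc, sum_Icc_succ_top (by omega), ih (by omega), hL]
    push_cast
    ring

include hbig in
lemma L_cycleEnd_succ (m : ℕ) : L (cycleEnd (m + 1)) = 2 ^ m + √2 ^ m := by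
  simpa [cycleEnd, ← rpow_half_eq_sqrt_two_pow] using hbig (m + 1) (by omega)

include hsmall hbig

lemma sum_Icc_cycleEnd (m : ℕ) :
    ∑ k ∈ Icc 1 (cycleEnd m), L k = 3 * (2 ^ m - 1) + ∑ i ∈ range m, √2 ^ i := by
  induction m with
  | zero => simp
  | succ m ih =>
    rw [cycleEnd_succ, sum_Icc_succ_top (by simp), sum_Icc_cycleEnd_add hsmall le_rfl, ih,
      ← cycleEnd_succ, L_cycleEnd_succ hbig, sum_range_succ]
    push_cast
    ring

lemma sum_Icc_le_of_cycleEnd_le_lt {m n : ℕ} (hle : cycleEnd m ≤ n)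
    (hlt : n < cycleEnd (m + 1)) :
    ∑ k ∈ Icc 1 n, L k ≤ 3 * n + ∑ i ∈ range m, √2 ^ i := by
  obtain ⟨j, rfl⟩ := Nat.exists_eq_add_of_le hle
  rw [cycleEnd_succ] at hlt
  rw [sum_Icc_cycleEnd_add hsmall (by omega), sum_Icc_cycleEnd hsmall hbig]
  push_cast [cast_cycleEnd]
  linarith [m.cast_nonneg (α := ℝ), j.cast_nonneg (α := ℝ)]

lemma sum_Icc_le_three_mul_add_sqrt {n : ℕ} (hn : 1 ≤ n) :
    ∑ k ∈ Icc 1 n, L k ≤ 3 * n + (√2 + 1) * √n := by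
  obtain ⟨m, hle, hlt⟩ := exists_cycleEnd_le_lt n
  have h2m : 2 ^ m ≤ n := by
    rcases Nat.eq_zero_or_pos m with rfl | hm
    · simpa using hn
    · unfold cycleEnd at hle
      omega
  calc ∑ k ∈ Icc 1 n, L k ≤ 3 * n + ∑ i ∈ range m, √2 ^ i :=
        sum_Icc_le_of_cycleEnd_le_lt hsmall hbig hle hlt
    _ ≤ 3 * n + (√2 + 1) * √2 ^ m := by grw [geom_sum_sqrt_two_le]
    _ ≤ 3 * n + (√2 + 1) * √n := by grw [sqrt_two_pow_le_sqrt (x := n) (by exact_mod_cast h2m)]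

lemma cesaro_mean_le {n : ℕ} (hn : 1 ≤ n) :
    1 / (n : ℝ) * ∑ k ∈ Icc 1 n, L k ≤ 3 + (√2 + 1) / √n := by
  have hn' : (0 : ℝ) < n := by exact_mod_cast hn
  calc 1 / (n : ℝ) * ∑ k ∈ Icc 1 n, L k ≤ 1 / n * (3 * n + (√2 + 1) * √n) := by
        grw [sum_Icc_le_three_mul_add_sqrt hsmall hbig hn]
    _ = 3 + (√2 + 1) / √n := by
        field_simp
        linear_combination (√2 + 1) * Real.mul_self_sqrt hn'.le

end HoldingCosts

theorem limsup_le_of_eventually_le_of_tendsto {ι : Type*} {l : Filter ι} [l.NeBot]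
    {u v : ι → ℝ} {b c : ℝ} (hu : ∀ i, b ≤ u i) (huv : u ≤ᶠ[l] v) (hv : Tendsto v l (𝓝 c)) :
    limsup u l ≤ c :=
  hv.limsup_eq ▸ limsup_le_limsup huv (isCoboundedUnder_le_of_le l hu) hv.isBoundedUnder_le

/-- Let `L_k ≥ 0` be the expected holding costs of the inter-order intervals of
the stochastic inventory policy: writing `k = 2^(i-1)+i+j-2` with `i ≥ 1` and
`1 ≤ j ≤ 2^(i-1)`, `L_k = 2` (the `(0,1)` sub-cycles), while
`L_{2^i+i-1} = 2^(i-1) + 2^((i-1)/2)` (the large sub-cycle of cycle `i`).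
Then `limsup_{n→∞} (1/n) Σ_{k=1}^n L_k ≤ 3`. -/
theorem holding_cost_cesaro_limsup_le_three
    (L : ℕ → ℝ) (hnonneg : ∀ k, 0 ≤ L k)
    (hsmall : ∀ i j : ℕ, 1 ≤ i → 1 ≤ j → j ≤ 2 ^ (i - 1) →
      L (2 ^ (i - 1) + i + j - 2) = 2)
    (hbig : ∀ i : ℕ, 1 ≤ i →
      L (2 ^ i + i - 1) = 2 ^ (i - 1) + (2 : ℝ) ^ (((i : ℝ) - 1) / 2)) :
    Filter.limsup
      (fun n : ℕ => (1 / (n : ℝ)) * ∑ k ∈ Finset.Icc 1 n, L k) Filter.atTop ≤ 3 := by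
  have hmean : ∀ᶠ n : ℕ in atTop,
      1 / (n : ℝ) * ∑ k ∈ Icc 1 n, L k ≤ 3 + (√2 + 1) / √(n : ℝ) := by
    filter_upwards [eventually_ge_atTop 1] with n hn using cesaro_mean_le hsmall hbig hn
  have hlim : Tendsto (fun n : ℕ => 3 + (√2 + 1) / √(n : ℝ)) atTop (𝓝 3) := by
    simpa using tendsto_const_nhds.add
      (tendsto_const_nhds.div_atTop (Real.tendsto_sqrt_atTop.comp tendsto_natCast_atTop_atTop))
  exact limsup_le_of_eventually_le_of_tendsto
    (fun n => mul_nonneg (by positivity) (sum_nonneg fun k _ => hnonneg k)) hmean hlim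
end
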